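/- arXiv:1912.03483 — 4 statements merged into one kernel-verified Lean document; each statement's English description precedes it below -/
import Mathlib

section
/- For a finite nonempty subset A of an abelian group G with D = A − A, one has |A|⁶ ≤ E₃(A) · Σ_{x,y ∈ D} 1_{D}(x − y), where E₃(A) = Σ_{x} |A ∩ (A+x)|³. -/
open Finset Pointwise

private lemma reindexA {G : Type*} [AddCommGroup G] [Fintype G] [DecidableEq G]
    (A : Finset G) (a : G) (f : G → ℕ) :
    ∑ x : G, (if a - x ∈ A then f x else 0) = ∑ b ∈ A, f (a - b) := by
  rw [show (∑ x : G, (if a - x ∈ A then f x else 0)) = ∑ y : G, (if y ∈ A then f (a - y) else 0) from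
    Fintype.sum_equiv (Equiv.subLeft a) _ _ (by intro x; simp [Equiv.subLeft, sub_sub_cancel]),
    Finset.sum_ite_mem, Finset.univ_inter]

private lemma interEqFilter {G : Type*} [AddCommGroup G] [Fintype G] [DecidableEq G]
    (A : Finset G) (x : G) :
    A ∩ (A + {x}) = A.filter (fun a => a - x ∈ A) := by
  ext a
  simp only [Finset.mem_inter, Finset.mem_filter, Finset.mem_add, Finset.mem_singleton]
  constructor
  · rintro ⟨h1, b, hb, y, rfl, rfl⟩; simp only [add_sub_cancel_right]; exact ⟨h1, hb⟩
  · rintro ⟨h1, h2⟩; exact ⟨h1, a - x, h2, x, rfl, by abel⟩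

private lemma nat_cs {ι : Type*} (s : Finset ι) (f : ι → ℕ) :
    (∑ i ∈ s, f i) ^ 2 ≤ s.card * ∑ i ∈ s, f i ^ 2 := by
  have h := sq_sum_le_card_mul_sum_sq (α := ℚ) (s := s) (f := fun i => (f i : ℚ))
  exact_mod_cast h

theorem card_pow_six_le_E3_mul_schur {G : Type*} [AddCommGroup G] [Fintype G]
    [DecidableEq G] (A : Finset G) (hA : A.Nonempty) :
    A.card ^ 6 ≤ (∑ x : G, (A ∩ (A + {x})).card ^ 3) *
      (((A - A) ×ˢ (A - A)).filter fun t => t.1 - t.2 ∈ A - A).card := by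
  set c : G → ℕ := fun x => ∑ a ∈ A, if a - x ∈ A then 1 else 0 with hc
  set f : G → G → ℕ := fun a x => if a - x ∈ A then 1 else 0 with hf
  set g : G → G → ℕ := fun x y => ∑ a ∈ A, f a x * f a y with hg
  set S := ((A - A) ×ˢ (A - A)).filter fun t => t.1 - t.2 ∈ A - A with hS
  have hcard : ∀ x, (A ∩ (A + {x})).card = c x := by
    intro x
    rw [interEqFilter, Finset.card_filter]
  have hcol : ∀ a ∈ A, (∑ x : G, f a x) = A.card := by
    intro a _
    rw [hf]
    rw [reindexA A a (fun _ => 1)]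
    simp
  have hcorr : ∀ a a' : G, (∑ x : G, f a x * f a' x) = c (a - a') := by
    intro a a'
    simp only [hf, ite_mul, one_mul, zero_mul]
    rw [reindexA A a (fun x => if a' - x ∈ A then 1 else 0)]
    apply Finset.sum_congr rfl
    intro b _
    congr 1
    simp [sub_sub_eq_add_sub, sub_add_eq_sub_sub]
    constructor <;> intro h <;> convert h using 2 <;> abel
  have hsub : S ⊆ Finset.univ ×ˢ Finset.univ := by intro t _; simp
  have hzero : ∀ t ∈ Finset.univ ×ˢ Finset.univ, t ∉ S → g t.1 t.2 = 0 := by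
    rintro ⟨x, y⟩ _ hts
    by_contra hne
    obtain ⟨a, ha, hterm⟩ := Finset.exists_ne_zero_of_sum_ne_zero hne
    have hax : a - x ∈ A := by by_contra h; simp [hf, h] at hterm
    have hay : a - y ∈ A := by by_contra h; simp [hf, h] at hterm
    apply hts
    rw [hS]
    simp only [Finset.mem_filter, Finset.mem_product, Finset.mem_sub]
    exact ⟨⟨⟨a, ha, a - x, hax, by abel⟩, ⟨a, ha, a - y, hay, by abel⟩⟩,
      ⟨a - y, hay, a - x, hax, by abel⟩⟩
  -- Step A: sum of g over S equals |A|^3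
  have hsumS : (∑ t ∈ S, g t.1 t.2) = A.card ^ 3 := by
    rw [Finset.sum_subset hsub hzero, Finset.sum_product]
    have h1 : ∀ x : G, ∑ y : G, g x y = (∑ a ∈ A, f a x * A.card) := by
      intro x
      rw [hg]
      simp only
      rw [Finset.sum_comm]
      exact Finset.sum_congr rfl fun a ha => by rw [← Finset.mul_sum, hcol a ha]
    simp only [h1]
    rw [Finset.sum_comm]
    rw [Finset.sum_congr rfl fun a ha => by rw [← Finset.sum_mul, hcol a ha]]
    rw [Finset.sum_const, smul_eq_mul]
    ring
  -- Step B: sum of g^2 over all pairs equals E3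
  have expand : ∀ x y : G, g x y ^ 2
      = ∑ a ∈ A, ∑ a' ∈ A, (f a x * f a' x) * (f a y * f a' y) := by
    intro x y
    rw [sq, hg]
    simp only
    rw [Finset.sum_mul_sum]
    exact Finset.sum_congr rfl fun a _ => Finset.sum_congr rfl fun a' _ => by ring
  have step1 : ∀ x : G, (∑ y : G, g x y ^ 2)
      = ∑ a ∈ A, ∑ a' ∈ A, (f a x * f a' x) * c (a - a') := by
    intro x
    simp only [expand x]
    rw [Finset.sum_comm]
    refine Finset.sum_congr rfl fun a _ => ?_
    rw [Finset.sum_comm]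
    exact Finset.sum_congr rfl fun a' _ => by rw [← Finset.mul_sum, hcorr]
  have hE3 : (∑ t ∈ Finset.univ ×ˢ Finset.univ, g t.1 t.2 ^ 2) = ∑ x : G, c x ^ 3 := by
    rw [Finset.sum_product]
    simp only [step1]
    rw [Finset.sum_comm]
    have lhs2 : ∀ a ∈ A, (∑ x : G, ∑ a' ∈ A, (f a x * f a' x) * c (a - a'))
        = ∑ a' ∈ A, c (a - a') ^ 2 := by
      intro a _
      rw [Finset.sum_comm]
      refine Finset.sum_congr rfl fun a' _ => ?_
      rw [← Finset.sum_mul, hcorr, sq]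
    rw [Finset.sum_congr rfl lhs2]
    have rhs1 : ∀ x : G, c x ^ 3 = ∑ a ∈ A, (if a - x ∈ A then c x ^ 2 else 0) := by
      intro x
      rw [pow_succ]
      rw [show (c x ^ 2 * c x : ℕ) = ∑ a ∈ A, c x ^ 2 * (if a - x ∈ A then 1 else 0) from
        Finset.mul_sum _ _ _]
      simp [mul_ite]
    rw [show (∑ x : G, c x ^ 3) = ∑ x : G, ∑ a ∈ A, (if a - x ∈ A then c x ^ 2 else 0) by
      exact Finset.sum_congr rfl fun x _ => rhs1 x]
    rw [Finset.sum_comm (s := (Finset.univ : Finset G)) (t := A)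
      (f := fun x a => if a - x ∈ A then c x ^ 2 else 0)]
    refine (Finset.sum_congr rfl fun a _ => ?_).symm
    rw [reindexA A a (fun x => c x ^ 2)]
  -- Assemble
  calc A.card ^ 6 = (A.card ^ 3) ^ 2 := by ring
    _ = (∑ t ∈ S, g t.1 t.2) ^ 2 := by rw [hsumS]
    _ ≤ S.card * ∑ t ∈ S, g t.1 t.2 ^ 2 := nat_cs _ _
    _ ≤ S.card * ∑ t ∈ Finset.univ ×ˢ Finset.univ, g t.1 t.2 ^ 2 := by
        exact Nat.mul_le_mul_left _ (Finset.sum_le_sum_of_subset hsub)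
    _ = S.card * ∑ x : G, c x ^ 3 := by rw [hE3]
    _ = (∑ x : G, (A ∩ (A + {x})).card ^ 3) * S.card := by
        simp only [hcard]; ring
end

section
/- Let p be a prime and D ⊂ 𝔽_p a set with |D| odd and |D| ≤ (2p+1)/3. Then the number of pairs (x, y) ∈ D² with x − y ∈ D is at most (3/4)|D|² + 1/4. -/
/-!
Write `r x` for the number of representations `x = a + b` with `a, b ∈ D`. The Schur triples are
counted by `∑ x ∈ D, r x = #D ^ 2 - ∑ x ∉ D, r x`. Pollard's theorem
`∑ x, min t (r x) ≥ t * min p (2 * #D - t)`, together with the trivial bound `t * #D` for the part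
of the left side over `D`, gives `∑ x ∉ D, r x ≥ t * (#D - t)` whenever `2 * #D - t ≤ p`. Taking
`t = ⌈#D / 2⌉` this is `⌊#D ^ 2 / 4⌋`, and `2 * #D - t ≤ p` is the size hypothesis.

Pollard's theorem is proved by induction on `#B` with Dyson e-transforms, which do not increase any
representation count; Cauchy–Davenport provides a transform that properly shrinks `B`. When the
shrunken `B` would be smaller than `t`, the transform is applied to `(Aᶜ, B)` instead: the Pollard
inequality for `(Aᶜ, B, #B - t)` implies the one for `(A, B, t)`.
-/

open Finset
open scoped Pointwise

namespace Finset

variable {G : Type*} [AddCommGroup G] [DecidableEq G] (A B : Finset G)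

lemma addConvolution_addDysonETransform_le (e x : G) :
    (addDysonETransform e (A, B)).1.addConvolution (addDysonETransform e (A, B)).2 x ≤
      A.addConvolution B x := by
  simp only [← card_add_eq, addDysonETransform_fst, addDysonETransform_snd]
  refine card_le_card_of_injOn (fun ab ↦ if ab.1 ∈ A then ab else (ab.2 + e, ab.1 - e)) ?_ ?_
  · rintro ⟨a, b⟩ hab
    simp only [coe_filter, mem_product, mem_union, mem_inter, mem_neg_vadd_finset_iff] at hab
    simp only [mem_vadd_finset, vadd_eq_add, Set.mem_ofPred_eq] at hab ⊢
    obtain ⟨⟨ha | ⟨b', hb', rfl⟩, hb, hbe⟩, rfl⟩ := hab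
    · simp [ha, hb]
    · split_ifs with h
      · simp [h, hb]
      · simp [add_comm b, hbe, hb']
        abel
  · rintro ⟨a₁, b₁⟩ h₁ ⟨a₂, b₂⟩ h₂ h
    simp only [coe_filter, mem_product, mem_union, mem_inter, mem_neg_vadd_finset_iff,
      Set.mem_ofPred_eq] at h₁ h₂
    dsimp only at h
    split_ifs at h with k₁ k₂ k₂ <;> simp only [Prod.mk.injEq] at h
    · exact Prod.ext h.1 h.2
    · exact absurd (by rw [show a₂ = e + b₁ by rw [h.2]; abel]; exact h₁.1.2.2) k₂
    · exact absurd (by rw [show a₁ = e + b₂ by rw [← h.2]; abel]; exact h₂.1.2.2) k₁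
    · exact Prod.ext (sub_left_injective h.2) (add_left_injective e h.1)

lemma card_filter_sub_mem_eq_sum_addConvolution (D : Finset G) :
    #{ab ∈ D ×ˢ D | ab.1 - ab.2 ∈ D} = ∑ x ∈ D, D.addConvolution D x := by
  have hswap : #{ab ∈ D ×ˢ D | ab.1 - ab.2 ∈ D} = #{ab ∈ D ×ˢ D | ab.1 + ab.2 ∈ D} :=
    card_nbij' (fun ab ↦ (ab.2, ab.1 - ab.2)) (fun ab ↦ (ab.1 + ab.2, ab.1))
      (by intro ab; simp +contextual) (by intro ab; simp +contextual)
      (by intro ab; simp) (by intro ab; simp)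
  rw [hswap, card_eq_sum_card_fiberwise (f := fun ab : G × G ↦ ab.1 + ab.2) (t := D)
    (s := {ab ∈ D ×ˢ D | ab.1 + ab.2 ∈ D})
    fun ab hab ↦ (mem_filter.mp hab).2]
  refine sum_congr rfl fun x hx ↦ ?_
  rw [filter_filter, ← card_add_eq]
  congr 1
  exact filter_congr fun ab _ ↦ ⟨And.right, fun h ↦ ⟨h ▸ hx, h⟩⟩

variable [Fintype G]

lemma sum_min_addConvolution_addDysonETransform_le (e : G) (t : ℕ) :
    ∑ x, min t ((addDysonETransform e (A, B)).1.addConvolution (addDysonETransform e (A, B)).2 x)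
      ≤ ∑ x, min t (A.addConvolution B x) := by
  gcongr with x
  exact addConvolution_addDysonETransform_le A B e x

lemma card_inter_neg_vadd_compl_add_card_inter_neg_vadd (e : G) :
    #(B ∩ (-e +ᵥ Aᶜ)) + #(B ∩ (-e +ᵥ A)) = #B := by
  have : B ∩ (-e +ᵥ Aᶜ) = B \ (-e +ᵥ A) := by ext; simp [mem_neg_vadd_finset_iff]
  rw [this, card_sdiff_add_card_inter]

lemma sum_addConvolution : ∑ x, A.addConvolution B x = #A * #B := by
  simp_rw [← card_add_eq, ← card_product]
  exact (card_eq_sum_card_fiberwise fun _ _ ↦ mem_univ _).symm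

lemma card_add_card_le_addConvolution_add_card (x : G) :
    #A + #B ≤ A.addConvolution B x + Fintype.card G := by
  have hunion := card_le_univ (A ∪ (x +ᵥ -B))
  have := card_inter_add_card_union A (x +ᵥ -B)
  rw [card_vadd_finset, card_neg, card_inter_vadd_neg] at this
  omega

lemma addConvolution_compl_add_addConvolution (x : G) :
    Aᶜ.addConvolution B x + A.addConvolution B x = #B := by
  rw [← card_inter_vadd_neg, ← card_inter_vadd_neg, inter_comm, ← sdiff_eq_inter_compl,
    inter_comm, card_sdiff_add_card_inter, card_vadd_finset, card_neg]

lemma sum_min_addConvolution_of_card_le {t : ℕ} (hB : #B ≤ t) :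
    ∑ x, min t (A.addConvolution B x) = #A * #B := by
  rw [← sum_addConvolution]
  exact sum_congr rfl fun x _ ↦ min_eq_right (addConvolution_le_card_right.trans hB)

lemma sum_min_addConvolution_of_card_add_le {t : ℕ} (h : Fintype.card G + t ≤ #A + #B) :
    ∑ x, min t (A.addConvolution B x) = t * Fintype.card G := by
  rw [← card_univ, mul_comm, ← smul_eq_mul, ← sum_const]
  refine sum_congr rfl fun x _ ↦ min_eq_left ?_
  have := card_add_card_le_addConvolution_add_card A B x
  omega

lemma le_sum_min_addConvolution_of_compl {t : ℕ} (ht : t ≤ #B)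
    (hcompl : (#B - t) * (Fintype.card G - #A + t) ≤ ∑ x, min (#B - t) (Aᶜ.addConvolution B x)) :
    t * (#A + #B - t) ≤ ∑ x, min t (A.addConvolution B x) := by
  -- `min (#B - t) (#B - r) = #B - max t r` and `max t r + min t r = t + r`
  have hpointwise (x : G) : min (#B - t) (Aᶜ.addConvolution B x) + (t + A.addConvolution B x) =
      min t (A.addConvolution B x) + #B := by
    have := addConvolution_compl_add_addConvolution A B x
    omega
  have hsum := sum_congr rfl fun x (_ : x ∈ univ) ↦ hpointwise x
  simp only [sum_add_distrib, sum_const, card_univ, smul_eq_mul, sum_addConvolution] at hsum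
  have hA := card_le_univ A
  zify [ht, hA, (by omega : t ≤ #A + #B)] at hsum hcompl ⊢
  nlinarith

end Finset

namespace ZMod

variable {p : ℕ}

lemma exists_card_inter_neg_vadd_pos_lt (hp : p.Prime) {A B : Finset (ZMod p)} (hA : A.Nonempty)
    (hB : 1 < #B) (hAp : #A < p) :
    ∃ e : ZMod p, 0 < #(B ∩ (-e +ᵥ A)) ∧ #(B ∩ (-e +ᵥ A)) < #B := by
  by_contra! h
  obtain ⟨b₀, hb₀⟩ := card_pos.mp (by omega : 0 < #B)
  have hsub : B + (-b₀ +ᵥ A) ⊆ A := by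
    intro x hx
    obtain ⟨b, hb, c, hc, rfl⟩ := mem_add.mp hx
    have hb₀c : b₀ ∈ B ∩ (-c +ᵥ A) := by
      rw [mem_neg_vadd_finset_iff] at hc
      simpa [mem_neg_vadd_finset_iff, hb₀, add_comm] using hc
    have hBc := inter_eq_left.mp
      (eq_of_subset_of_card_le inter_subset_left (h c (card_pos.mpr ⟨b₀, hb₀c⟩)))
    simpa [mem_neg_vadd_finset_iff, add_comm] using hBc hb
  have := (cauchy_davenport hp ⟨b₀, hb₀⟩ (hA.vadd_finset (a := -b₀))).trans (card_le_card hsub)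
  rw [card_vadd_finset] at this
  omega

theorem pollard [Fact p.Prime] (A B : Finset (ZMod p)) {t : ℕ} (htA : t ≤ #A) (htB : t ≤ #B) :
    t * min p (#A + #B - t) ≤ ∑ x, min t (A.addConvolution B x) := by
  induction B using Finset.strongInduction generalizing A t with
  | H B ih =>
  rcases le_or_gt (p + t) (#A + #B) with hcover | hsmall
  · rw [sum_min_addConvolution_of_card_add_le A B (by rwa [ZMod.card]), ZMod.card]
    exact Nat.mul_le_mul_left _ (min_le_left _ _)
  rw [min_eq_right (by omega)]
  rcases Nat.eq_zero_or_pos t with rfl | ht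
  · simp
  rcases htB.eq_or_lt with rfl | htB
  · rw [sum_min_addConvolution_of_card_le A _ le_rfl, Nat.add_sub_cancel, mul_comm]
  have hAp : #A < p := by omega
  obtain ⟨e, he, heB⟩ :=
    exists_card_inter_neg_vadd_pos_lt Fact.out (card_pos.mp (by omega)) (by omega : 1 < #B) hAp
  rcases le_or_gt t #(B ∩ (-e +ᵥ A)) with hte | hte
  · have hIH := ih _ (inter_subset_left.ssubset_of_ne fun h ↦ heB.ne (by rw [h]))
      (A ∪ (e +ᵥ B)) (htA.trans (card_le_card subset_union_left)) hte
    have hcard := addDysonETransform.card e (A, B)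
    simp only [addDysonETransform_fst, addDysonETransform_snd] at hcard
    rw [hcard, min_eq_right (by omega)] at hIH
    exact hIH.trans (sum_min_addConvolution_addDysonETransform_le A B e t)
  · have hsplit := card_inter_neg_vadd_compl_add_card_inter_neg_vadd A B e
    have hIH := ih _ (inter_subset_left.ssubset_of_ne fun h ↦ by rw [h] at hsplit; omega)
      (Aᶜ ∪ (e +ᵥ B))
      ((by rw [card_compl, ZMod.card]; omega : #B - t ≤ #Aᶜ).trans (card_le_card subset_union_left))
      (by omega)
    have hcard := addDysonETransform.card e (Aᶜ, B)
    simp only [addDysonETransform_fst, addDysonETransform_snd] at hcard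
    rw [hcard, card_compl, ZMod.card, min_eq_right (by omega),
      show p - #A + #B - (#B - t) = p - #A + t by omega] at hIH
    refine le_sum_min_addConvolution_of_compl A B htB.le ?_
    rw [ZMod.card]
    exact hIH.trans (sum_min_addConvolution_addDysonETransform_le Aᶜ B e _)

theorem card_filter_sub_mem_add_mul_le [Fact p.Prime] (D : Finset (ZMod p)) {t : ℕ}
    (ht : t ≤ #D) (hp : 2 * #D ≤ p + t) :
    #{ab ∈ D ×ˢ D | ab.1 - ab.2 ∈ D} + t * (#D - t) ≤ #D ^ 2 := by
  have hpollard := pollard D D ht ht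
  rw [min_eq_right (by omega)] at hpollard
  have hsum := sum_add_sum_compl D (D.addConvolution D)
  have hsum_min := sum_add_sum_compl D fun x ↦ min t (D.addConvolution D x)
  have hmin_D : ∑ x ∈ D, min t (D.addConvolution D x) ≤ #D * t := by
    simpa using sum_le_sum fun x (_ : x ∈ D) ↦ min_le_left t (D.addConvolution D x)
  have hmin_Dc : ∑ x ∈ Dᶜ, min t (D.addConvolution D x) ≤ ∑ x ∈ Dᶜ, D.addConvolution D x :=
    sum_le_sum fun x _ ↦ min_le_right _ _
  rw [sum_addConvolution] at hsum
  rw [card_filter_sub_mem_eq_sum_addConvolution]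
  zify [ht, (by omega : t ≤ #D + #D)] at hpollard hsum hsum_min hmin_D hmin_Dc ⊢
  nlinarith

end ZMod

theorem schur_triples_bound_general {p : ℕ} (hp : p.Prime) (D : Finset (ZMod p))
    (hsize : (D.card : ℝ) ≤ (2 * p + 1) / 3) :
    (((D ×ˢ D).filter fun t => t.1 - t.2 ∈ D).card : ℝ) ≤
      3 / 4 * (D.card : ℝ) ^ 2 + 1 / 4 := by
  have : Fact p.Prime := ⟨hp⟩
  have h3D : 3 * #D ≤ 2 * p + 1 := by exact_mod_cast (by linarith : (3 : ℝ) * #D ≤ 2 * p + 1)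
  have hkey := ZMod.card_filter_sub_mem_add_mul_le D (t := (#D + 1) / 2) (by omega) (by omega)
  have hsq : #D ^ 2 ≤ 4 * ((#D + 1) / 2 * (#D - (#D + 1) / 2)) + 1 := by
    obtain ⟨k, hk | hk⟩ := Nat.even_or_odd' #D <;> rw [hk]
    · rw [show (2 * k + 1) / 2 = k by omega, show 2 * k - k = k by omega]
      ring_nf; omega
    · rw [show (2 * k + 1 + 1) / 2 = k + 1 by omega, show 2 * k + 1 - (k + 1) = k by omega]
      ring_nf; omega
  have : 4 * #{ab ∈ D ×ˢ D | ab.1 - ab.2 ∈ D} ≤ 3 * #D ^ 2 + 1 := by omega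
  have : (4 : ℝ) * #{ab ∈ D ×ˢ D | ab.1 - ab.2 ∈ D} ≤ 3 * #D ^ 2 + 1 := by exact_mod_cast this
  linarith

theorem schur_triples_bound {p : ℕ} (hp : p.Prime) (D : Finset (ZMod p))
    (hodd : Odd D.card) (hsize : (D.card : ℝ) ≤ (2 * p + 1) / 3) :
    (((D ×ˢ D).filter fun t => t.1 - t.2 ∈ D).card : ℝ) ≤
      3 / 4 * (D.card : ℝ) ^ 2 + 1 / 4 :=
  schur_triples_bound_general hp D hsize
end

section
/- Let Z be a finite subset of the unit circle in the complex plane. If |Σ_{z ∈ Z} z| = η|Z|, then there is an open arc of the circle of angle measure π containing at least (1/2)(1 + η)|Z| elements of Z. -/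
/-!
Let `N θ` be the number of points of `Z` in the open semicircle centred at `exp (θ * I)`, and
`φ = arg (∑ z)`. A point `exp (x * I)` lies in the semicircle centred at `exp ((φ + u) * I)` iff
`0 < cos (x - φ - u)`, and `∫_{-π/2}^{π/2} 1[0 < cos (y - u)] cos u du = 1 + cos y` for every `y`.
Summing over `Z`,
`∫_{-π/2}^{π/2} N (φ + u) cos u du = |Z| + re (e^{-iφ} ∑ z) = |Z| + ‖∑ z‖ = (1 + η) |Z|`,
while `∫_{-π/2}^{π/2} cos u du = 2`; so `N (φ + u) ≥ (1 + η) |Z| / 2` for some `u`.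
-/

open Real MeasureTheory intervalIntegral Finset
open Complex (I arg)

noncomputable def cosOnSemicircle (x u : ℝ) : ℝ := if 0 < cos (x - u) then cos u else 0

lemma cosOnSemicircle_eq_indicator (x : ℝ) :
    cosOnSemicircle x = {u | 0 < cos (x - u)}.indicator cos := by
  ext u; simp [cosOnSemicircle, Set.indicator_apply]

lemma intervalIntegrable_cosOnSemicircle (x a b : ℝ) :
    IntervalIntegrable (cosOnSemicircle x) volume a b := by
  rw [cosOnSemicircle_eq_indicator, intervalIntegrable_iff]
  exact (continuous_cos.intervalIntegrable a b).def'.indicator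
    (measurableSet_lt measurable_const (by fun_prop))

lemma cosOnSemicircle_neg (x u : ℝ) : cosOnSemicircle (-x) (-u) = cosOnSemicircle x u := by
  rw [cosOnSemicircle, cosOnSemicircle, neg_sub_neg, ← neg_sub x, cos_neg, cos_neg]

lemma integral_cosOnSemicircle_of_mem_Icc {x : ℝ} (hx : x ∈ Set.Icc 0 π) :
    ∫ u in -(π / 2)..π / 2, cosOnSemicircle x u = 1 + cos x := by
  obtain ⟨hx0, hxπ⟩ := hx
  have hπ := pi_pos
  have h_left : ∫ u in -(π / 2)..x - π / 2, cosOnSemicircle x u = 0 := by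
    refine (integral_congr fun u hu => ?_).trans integral_zero
    rw [Set.uIcc_of_le (by linarith)] at hu
    have : cos (x - u) ≤ 0 :=
      cos_nonpos_of_pi_div_two_le_of_le (by linarith [hu.2]) (by linarith [hu.1])
    simp [cosOnSemicircle, this.not_gt]
  have h_right : ∫ u in x - π / 2..π / 2, cosOnSemicircle x u = 1 + cos x := by
    -- at the endpoint `u = π / 2` with `x = 0` the condition fails, but there `cos u = 0`
    have : ∫ u in x - π / 2..π / 2, cosOnSemicircle x u = ∫ u in x - π / 2..π / 2, cos u := by
      refine integral_congr_ae (.of_forall fun u hu => ?_)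
      rw [Set.uIoc_of_le (by linarith)] at hu
      rcases hu.2.lt_or_eq with hu2 | rfl
      · have : 0 < cos (x - u) := cos_pos_of_mem_Ioo ⟨by linarith, by linarith [hu.1]⟩
        simp [cosOnSemicircle, this]
      · simp [cosOnSemicircle]
    rw [this, integral_cos, sin_pi_div_two, sin_sub_pi_div_two, sub_neg_eq_add]
  rw [← integral_add_adjacent_intervals (b := x - π / 2) (intervalIntegrable_cosOnSemicircle ..)
    (intervalIntegrable_cosOnSemicircle ..), h_left, h_right, zero_add]

lemma integral_cosOnSemicircle_neg (x : ℝ) :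
    ∫ u in -(π / 2)..π / 2, cosOnSemicircle (-x) u =
      ∫ u in -(π / 2)..π / 2, cosOnSemicircle x u := by
  simp_rw [← cosOnSemicircle_neg x]
  rw [integral_comp_neg, neg_neg]

lemma cosOnSemicircle_add_two_pi (x : ℝ) : cosOnSemicircle (x + 2 * π) = cosOnSemicircle x := by
  ext u
  rw [cosOnSemicircle, cosOnSemicircle, add_sub_right_comm, cos_add_two_pi]

theorem integral_cosOnSemicircle (x : ℝ) :
    ∫ u in -(π / 2)..π / 2, cosOnSemicircle x u = 1 + cos x := by
  set G : ℝ → ℝ := fun x => (∫ u in -(π / 2)..π / 2, cosOnSemicircle x u) - (1 + cos x) with hG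
  have hG_periodic : Function.Periodic G (2 * π) := fun x => by
    simp only [hG, cosOnSemicircle_add_two_pi, cos_add_two_pi]
  have hG_even : ∀ x, G (-x) = G x := fun x => by
    simp only [hG, integral_cosOnSemicircle_neg, cos_neg]
  have hG_Icc : ∀ x ∈ Set.Icc 0 π, G x = 0 := fun x hx => by
    simp only [hG, integral_cosOnSemicircle_of_mem_Icc hx, sub_self]
  obtain ⟨y, ⟨hy₁, hy₂⟩, hxy⟩ := hG_periodic.exists_mem_Ico two_pi_pos x (-π)
  suffices G y = 0 by rw [← sub_eq_zero]; exact hxy.trans this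
  rcases le_total 0 y with hy | hy
  · exact hG_Icc y ⟨hy, by linarith⟩
  · rw [← hG_even]; exact hG_Icc (-y) ⟨by linarith, by linarith⟩

lemma re_mul_exp_neg_mul_I (z : ℂ) (θ : ℝ) :
    (z * Complex.exp (-(θ : ℂ) * I)).re = ‖z‖ * cos (arg z - θ) := by
  conv_lhs => rw [← Complex.norm_mul_exp_arg_mul_I z]
  rw [mul_assoc, ← Complex.exp_add, ← add_mul, ← sub_eq_add_neg, ← Complex.ofReal_sub,
    Complex.re_ofReal_mul, Complex.exp_ofReal_mul_I_re]

theorem exists_le_natCast_of_mul_integral_le {N : ℝ → ℕ} {w : ℝ → ℝ} {a b c : ℝ} (hab : a ≤ b)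
    (hw : ∀ u ∈ Set.Icc a b, 0 ≤ w u) (hw_int : IntervalIntegrable w volume a b)
    (hNw_int : IntervalIntegrable (fun u => N u * w u) volume a b)
    (hw_pos : 0 < ∫ u in a..b, w u) (h : c * ∫ u in a..b, w u ≤ ∫ u in a..b, N u * w u) :
    ∃ u ∈ Set.Icc a b, c ≤ N u := by
  by_contra! hN
  -- `N` is integer valued, so `N < c` on `[a, b]` gives the uniform bound `N ≤ ⌈c⌉ - 1 < c`
  have hM : ∀ u ∈ Set.Icc a b, (N u : ℝ) ≤ (⌈c⌉ - 1 : ℤ) := fun u hu => by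
    exact_mod_cast Int.le_sub_one_of_lt (Int.lt_ceil.2 (hN u hu))
  have hMc : ((⌈c⌉ - 1 : ℤ) : ℝ) < c := by push_cast; linarith [Int.ceil_lt_add_one c]
  have : ∫ u in a..b, N u * w u ≤ ∫ u in a..b, ((⌈c⌉ - 1 : ℤ) : ℝ) * w u :=
    integral_mono_on hab hNw_int (hw_int.const_mul _) fun u hu =>
      mul_le_mul_of_nonneg_right (hM u hu) (hw u hu)
  rw [intervalIntegral.integral_const_mul] at this
  linarith [mul_lt_mul_of_pos_right hMc hw_pos]

/-- For `‖z‖ = 1`, `z` is counted iff it lies in the open semicircle centred at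
`exp (θ * I)`. -/
noncomputable def semicircleCount (Z : Finset ℂ) (θ : ℝ) : ℕ :=
  #(Z.filter fun z => 0 < (z * Complex.exp (-(θ : ℂ) * I)).re)

lemma semicircleCount_mul_cos (Z : Finset ℂ) (hZ : (0 : ℂ) ∉ Z) (φ u : ℝ) :
    semicircleCount Z (φ + u) * cos u = ∑ z ∈ Z, cosOnSemicircle (arg z - φ) u := by
  rw [semicircleCount, card_filter, Nat.cast_sum, sum_mul]
  refine sum_congr rfl fun z hz => ?_
  have hz0 : 0 < ‖z‖ := norm_pos_iff.2 (ne_of_mem_of_not_mem hz hZ)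
  simp only [re_mul_exp_neg_mul_I, mul_pos_iff_of_pos_left hz0, sub_sub, cosOnSemicircle]
  split_ifs <;> simp

lemma intervalIntegrable_semicircleCount_mul_cos (Z : Finset ℂ) (hZ : (0 : ℂ) ∉ Z) (φ a b : ℝ) :
    IntervalIntegrable (fun u => semicircleCount Z (φ + u) * cos u) volume a b := by
  simp_rw [semicircleCount_mul_cos Z hZ]
  simpa only [sum_fn] using
    IntervalIntegrable.sum Z fun z _ => intervalIntegrable_cosOnSemicircle (arg z - φ) a b

theorem integral_semicircleCount_mul_cos (Z : Finset ℂ) (hZ : ∀ z ∈ Z, ‖z‖ = 1) :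
    ∫ u in -(π / 2)..π / 2, semicircleCount Z (arg (∑ z ∈ Z, z) + u) * cos u =
      #Z + ‖∑ z ∈ Z, z‖ := by
  have h0 : (0 : ℂ) ∉ Z := fun h => by simpa using hZ 0 h
  simp_rw [semicircleCount_mul_cos Z h0]
  rw [integral_finsetSum fun z _ => intervalIntegrable_cosOnSemicircle _ _ _]
  simp_rw [integral_cosOnSemicircle]
  rw [sum_add_distrib, sum_const, nsmul_one]
  congr 1
  calc ∑ z ∈ Z, cos (arg z - arg (∑ z ∈ Z, z))
      = ((∑ z ∈ Z, z) * Complex.exp (-(arg (∑ z ∈ Z, z) : ℂ) * I)).re := by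
        simp_rw [sum_mul, Complex.re_sum, re_mul_exp_neg_mul_I]
        exact sum_congr rfl fun z hz => by rw [hZ z hz, one_mul]
    _ = ‖∑ z ∈ Z, z‖ := by rw [re_mul_exp_neg_mul_I, sub_self, cos_zero, mul_one]

theorem freiman_unit_circle (Z : Finset ℂ) (hZ : ∀ z ∈ Z, ‖z‖ = 1)
    (η : ℝ) (hη : ‖∑ z ∈ Z, z‖ = η * Z.card) :
    ∃ θ : ℝ, (1 / 2 : ℝ) * (1 + η) * Z.card ≤
      ((Z.filter fun z => 0 < (z * Complex.exp (-(θ : ℂ) * Complex.I)).re).card : ℝ) := by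
  have h0 : (0 : ℂ) ∉ Z := fun h => by simpa using hZ 0 h
  have hπ := pi_pos
  have h_cos : ∫ u in -(π / 2)..π / 2, cos u = 2 := by
    rw [integral_cos, sin_pi_div_two, sin_neg, sin_pi_div_two]; norm_num
  obtain ⟨u, -, hu⟩ := exists_le_natCast_of_mul_integral_le
    (N := fun u => semicircleCount Z (arg (∑ z ∈ Z, z) + u)) (w := cos)
    (c := 1 / 2 * (1 + η) * #Z) (by linarith)
    (fun u hu => cos_nonneg_of_mem_Icc hu) (continuous_cos.intervalIntegrable _ _)
    (intervalIntegrable_semicircleCount_mul_cos Z h0 _ _ _) (by rw [h_cos]; norm_num)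
    (le_of_eq <| by rw [h_cos, integral_semicircleCount_mul_cos Z hZ, hη]; ring)
  exact ⟨_, hu⟩
end

section
/- Let A be a nonempty subset of a finite abelian group G, let K = |A+A|/|A|, α = |A|/|G|, γ = |A+A|/|G|, and let η|A| be the maximum of |Â(χ)| over nonprincipal characters χ. Then η ≥ K^{−1/2}·√((1 − γ)/(1 − α)). -/
open Finset Pointwise

lemma my_parseval {G : Type*} [AddCommGroup G] [Fintype G] [DecidableEq G] (B : Finset G) :
    ∑ χ : AddChar G ℂ, ‖∑ b ∈ B, χ b‖ ^ 2 = Fintype.card G * B.card := by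
  have key : ∑ χ : AddChar G ℂ, (∑ b ∈ B, χ b) * (starRingEnd ℂ) (∑ c ∈ B, χ c)
      = (Fintype.card G : ℂ) * B.card := by
    simp_rw [map_sum, Finset.sum_mul, Finset.mul_sum, ← AddChar.map_neg_eq_conj,
      ← AddChar.map_add_eq_mul, ← sub_eq_add_neg]
    rw [Finset.sum_comm]
    simp_rw [Finset.sum_comm (s := (Finset.univ : Finset (AddChar G ℂ)))]
    simp_rw [AddChar.sum_apply_eq_ite, sub_eq_zero]
    simp [Finset.sum_ite_eq, mul_comm]
  have h2 : ((∑ χ : AddChar G ℂ, ‖∑ b ∈ B, χ b‖ ^ 2 : ℝ) : ℂ)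
      = (Fintype.card G : ℂ) * B.card := by
    push_cast
    simp_rw [← Complex.mul_conj']
    exact key
  exact_mod_cast h2

lemma my_triple {G : Type*} [AddCommGroup G] [Fintype G] [DecidableEq G] (A : Finset G) :
    ∑ χ : AddChar G ℂ, (∑ a ∈ A, χ a) * (∑ b ∈ A, χ b) * (starRingEnd ℂ) (∑ s ∈ A + A, χ s)
      = (Fintype.card G : ℂ) * (A.card : ℂ) ^ 2 := by
  simp_rw [map_sum, Finset.sum_mul, Finset.mul_sum, ← AddChar.map_neg_eq_conj,
    ← AddChar.map_add_eq_mul]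
  simp_rw [Finset.sum_mul, ← AddChar.map_add_eq_mul, ← sub_eq_add_neg]
  rw [Finset.sum_comm]
  simp_rw [Finset.sum_comm (s := (Finset.univ : Finset (AddChar G ℂ)))]
  simp_rw [AddChar.sum_apply_eq_ite, sub_eq_zero]
  have : ∀ a ∈ A, (∑ s ∈ A + A, ∑ b ∈ A, if a + b = s then (Fintype.card G : ℂ) else 0)
      = (Fintype.card G : ℂ) * A.card := by
    intro a ha
    rw [Finset.sum_comm]
    have : ∀ b ∈ A, (∑ s ∈ A + A, if a + b = s then (Fintype.card G : ℂ) else 0)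
        = (Fintype.card G : ℂ) := by
      intro b hb
      rw [Finset.sum_ite_eq (A + A) (a + b)]
      simp [Finset.add_mem_add ha hb]
    rw [Finset.sum_congr rfl this, Finset.sum_const, nsmul_eq_mul, mul_comm]
  rw [Finset.sum_congr rfl this, Finset.sum_const, nsmul_eq_mul]
  ring

theorem fourier_bias_lower {G : Type*} [AddCommGroup G] [Fintype G] [DecidableEq G]
    (A : Finset G) (hA : A.Nonempty) (hA' : A ≠ Finset.univ)
    (K α γ η : ℝ)
    (hK : K = ((A + A).card : ℝ) / A.card)
    (hα : α = (A.card : ℝ) / Fintype.card G)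
    (hγ : γ = ((A + A).card : ℝ) / Fintype.card G)
    (hmax : ∃ χ : AddChar G ℂ, χ ≠ 1 ∧ ‖∑ a ∈ A, χ a‖ = η * A.card)
    (hbound : ∀ χ : AddChar G ℂ, χ ≠ 1 → ‖∑ a ∈ A, χ a‖ ≤ η * A.card) :
    η ≥ K ^ (-(1 : ℝ) / 2) * Real.sqrt ((1 - γ) / (1 - α)) := by
  classical
  obtain ⟨χ₀, hχ₀ne, hχ₀⟩ := hmax
  set n : ℝ := (Fintype.card G : ℝ) with hn
  set a : ℝ := (A.card : ℝ) with ha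
  set s : ℝ := ((A + A).card : ℝ) with hs
  have ha0 : 0 < a := by rw [ha]; exact_mod_cast Finset.card_pos.2 hA
  have has : a ≤ s := by rw [ha, hs]; exact_mod_cast Finset.card_le_card_add_self (s := A)
  have hs0 : 0 < s := lt_of_lt_of_le ha0 has
  have hsn : s ≤ n := by rw [hs, hn]; exact_mod_cast Finset.card_le_univ (A + A)
  have hn0 : 0 < n := lt_of_lt_of_le hs0 hsn
  have han : a < n := by
    have h' : A ⊂ Finset.univ := Finset.ssubset_univ_iff.2 hA'
    rw [ha, hn]; exact_mod_cast Finset.card_lt_card h'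
  have hη0 : 0 ≤ η := by
    have h1 : 0 ≤ η * a := hχ₀ ▸ norm_nonneg _
    nlinarith
  -- abbreviations
  set f : AddChar G ℂ → ℂ := fun χ => ∑ x ∈ A, χ x with hf
  set g : AddChar G ℂ → ℂ := fun χ => ∑ x ∈ A + A, χ x with hg
  have hf1 : f 1 = (a : ℂ) := by simp [hf, ha]
  have hg1 : g 1 = (s : ℂ) := by simp [hg, hs]
  -- Parseval pieces over nonprincipal characters
  have hsplit : ∀ F : AddChar G ℂ → ℂ,
      F 1 + ∑ χ ∈ Finset.univ.erase 1, F χ = ∑ χ : AddChar G ℂ, F χ :=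
    fun F => Finset.add_sum_erase _ F (Finset.mem_univ 1)
  have hsplitR : ∀ F : AddChar G ℂ → ℝ,
      F 1 + ∑ χ ∈ Finset.univ.erase 1, F χ = ∑ χ : AddChar G ℂ, F χ :=
    fun F => Finset.add_sum_erase _ F (Finset.mem_univ 1)
  have hP1 : ∑ χ ∈ Finset.univ.erase 1, ‖f χ‖ ^ 2 = n * a - a ^ 2 := by
    have := my_parseval A
    have h := hsplitR (fun χ => ‖f χ‖ ^ 2)
    rw [this, hf1] at h
    have h2 : ‖((a : ℝ) : ℂ)‖ ^ 2 = a ^ 2 := by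
      rw [Complex.norm_real, Real.norm_eq_abs, sq_abs]
    rw [h2] at h
    linarith
  have hP2 : ∑ χ ∈ Finset.univ.erase 1, ‖g χ‖ ^ 2 = n * s - s ^ 2 := by
    have := my_parseval (A + A)
    have h := hsplitR (fun χ => ‖g χ‖ ^ 2)
    rw [this] at h
    have h2 : ‖((s : ℝ) : ℂ)‖ ^ 2 = s ^ 2 := by
      rw [Complex.norm_real, Real.norm_eq_abs, sq_abs]
    rw [hg1, h2] at h
    linarith
  have hT : ∑ χ ∈ Finset.univ.erase 1, f χ * f χ * (starRingEnd ℂ) (g χ)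
      = ((n * a ^ 2 - a ^ 2 * s : ℝ) : ℂ) := by
    have h := hsplit (fun χ => f χ * f χ * (starRingEnd ℂ) (g χ))
    rw [my_triple A] at h
    rw [hf1, hg1] at h
    have hconj : (starRingEnd ℂ) ((s : ℝ) : ℂ) = ((s : ℝ) : ℂ) := Complex.conj_ofReal s
    rw [hconj] at h
    have hnc : ((Fintype.card G : ℕ) : ℂ) = ((n : ℝ) : ℂ) := by rw [hn]; norm_cast
    have hac : ((A.card : ℕ) : ℂ) = ((a : ℝ) : ℂ) := by rw [ha]; norm_cast
    rw [hnc, hac] at h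
    push_cast
    linear_combination h
  -- Step 1: the main term bound
  have key1 : a ^ 2 * (n - s) ≤ ∑ χ ∈ Finset.univ.erase 1, ‖f χ‖ ^ 2 * ‖g χ‖ := by
    have hnn : 0 ≤ n * a ^ 2 - a ^ 2 * s := by nlinarith
    calc a ^ 2 * (n - s) = ‖((n * a ^ 2 - a ^ 2 * s : ℝ) : ℂ)‖ := by
          rw [Complex.norm_real, Real.norm_eq_abs, abs_of_nonneg hnn]; ring
      _ = ‖∑ χ ∈ Finset.univ.erase 1, f χ * f χ * (starRingEnd ℂ) (g χ)‖ := by rw [hT]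
      _ ≤ ∑ χ ∈ Finset.univ.erase 1, ‖f χ * f χ * (starRingEnd ℂ) (g χ)‖ :=
          norm_sum_le _ _
      _ = ∑ χ ∈ Finset.univ.erase 1, ‖f χ‖ ^ 2 * ‖g χ‖ := by
          refine Finset.sum_congr rfl fun χ _ => ?_
          rw [norm_mul, norm_mul, RCLike.norm_conj, sq]
  -- Step 2: apply the bound on nonprincipal coefficients
  have key2 : ∑ χ ∈ Finset.univ.erase 1, ‖f χ‖ ^ 2 * ‖g χ‖
      ≤ η * a * ∑ χ ∈ Finset.univ.erase 1, ‖f χ‖ * ‖g χ‖ := by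
    rw [Finset.mul_sum]
    refine Finset.sum_le_sum fun χ hχ => ?_
    have hne : χ ≠ 1 := (Finset.mem_erase.1 hχ).1
    have hb := hbound χ hne
    calc ‖f χ‖ ^ 2 * ‖g χ‖ = ‖f χ‖ * (‖f χ‖ * ‖g χ‖) := by ring
      _ ≤ (η * a) * (‖f χ‖ * ‖g χ‖) :=
          mul_le_mul_of_nonneg_right hb (by positivity)
      _ = η * a * (‖f χ‖ * ‖g χ‖) := by ring
  -- Step 3: Cauchy-Schwarz
  set X : ℝ := ∑ χ ∈ Finset.univ.erase 1, ‖f χ‖ * ‖g χ‖ with hX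
  have hX0 : 0 ≤ X := Finset.sum_nonneg fun χ _ => by positivity
  have hCS : X ^ 2 ≤ (n * a - a ^ 2) * (n * s - s ^ 2) := by
    have := Finset.sum_mul_sq_le_sq_mul_sq (Finset.univ.erase (1 : AddChar G ℂ))
      (fun χ => ‖f χ‖) (fun χ => ‖g χ‖)
    rw [hP1, hP2] at this
    exact this
  -- Combine
  have key3 : (a ^ 2 * (n - s)) ^ 2 ≤ η ^ 2 * a ^ 2 * ((n * a - a ^ 2) * (n * s - s ^ 2)) := by
    have h1 : a ^ 2 * (n - s) ≤ η * a * X := le_trans key1 key2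
    have h2 : 0 ≤ a ^ 2 * (n - s) := by nlinarith
    calc (a ^ 2 * (n - s)) ^ 2 ≤ (η * a * X) ^ 2 := pow_le_pow_left₀ h2 h1 2
      _ = η ^ 2 * a ^ 2 * X ^ 2 := by ring
      _ ≤ η ^ 2 * a ^ 2 * ((n * a - a ^ 2) * (n * s - s ^ 2)) :=
          mul_le_mul_of_nonneg_left hCS (by positivity)
  -- Now the final algebra
  rcases eq_or_lt_of_le hsn with hse | hse
  · -- A + A = univ : RHS is zero
    have : (1 - γ) = 0 := by rw [hγ, ← hse, div_self hs0.ne']; ring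
    rw [this]
    have : Real.sqrt (0 / (1 - α)) = 0 := by rw [zero_div, Real.sqrt_zero]
    rw [this, mul_zero]
    exact hη0
  · have hKpos : 0 < K := by rw [hK]; positivity
    have hKval : K ^ (-(1 : ℝ) / 2) = Real.sqrt (a / s) := by
      rw [show (-(1 : ℝ) / 2) = -(1 / 2 : ℝ) by ring, Real.rpow_neg hKpos.le,
        ← Real.sqrt_eq_rpow, ← Real.sqrt_inv]
      congr 1
      rw [hK]
      rw [inv_div]
    have hfrac : (1 - γ) / (1 - α) = (n - s) / (n - a) := by
      rw [hγ, hα]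
      rw [show (1 : ℝ) - s / n = (n - s) / n by field_simp,
        show (1 : ℝ) - a / n = (n - a) / n by field_simp]
      rw [div_div_div_cancel_right₀ hn0.ne']
    rw [hKval, hfrac, ← Real.sqrt_mul (le_of_lt (div_pos ha0 hs0))]
    have hna : 0 < n - a := by linarith
    have hns : 0 < n - s := by linarith
    have hgoal : a / s * ((n - s) / (n - a)) ≤ η ^ 2 := by
      rw [div_mul_div_comm, div_le_iff₀ (mul_pos hs0 hna)]
      have hC : 0 < a ^ 3 * (n - s) := mul_pos (pow_pos ha0 3) hns
      have h5 : (a * (n - s)) * (a ^ 3 * (n - s)) ≤ (η ^ 2 * (s * (n - a))) * (a ^ 3 * (n - s)) := by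
        calc (a * (n - s)) * (a ^ 3 * (n - s)) = (a ^ 2 * (n - s)) ^ 2 := by ring
          _ ≤ η ^ 2 * a ^ 2 * ((n * a - a ^ 2) * (n * s - s ^ 2)) := key3
          _ = (η ^ 2 * (s * (n - a))) * (a ^ 3 * (n - s)) := by ring
      have := le_of_mul_le_mul_right h5 hC
      linarith
    calc Real.sqrt (a / s * ((n - s) / (n - a))) ≤ Real.sqrt (η ^ 2) :=
        Real.sqrt_le_sqrt hgoal
      _ = η := Real.sqrt_sq hη0
end
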